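/- arXiv:1509.03533 — 3 statements merged into one kernel-verified Lean document; each statement's English description precedes it below -/
import Mathlib

section
/- Let I be a finite set, d : I → ℤ, p : I → {0,1} with p(i) ≡ d(i) (mod 2), and B : ℤ^I × ℤ^I → ℤ a symmetric bilinear form with B(e_i,e_i) = 2d(i) and B(e_i,e_j) even for i ≠ j. Assume that at most one element i ∈ I has p(i) = 1. Let φ : ℤ^I × ℤ^I → ℤ be a function whose reduction mod 4 is ℤ-bilinear, satisfying φ(e_i, e_i) = d(i), φ(e_i, e_j) ∈ 2ℤ for i ≠ j, and φ(e_i, e_j) - φ(e_j, e_i) ≡ B(e_i,e_j) + 2 p(i) p(j) (mod 4) for all i, j ∈ I. Then for all μ, ν ∈ ℤ^I one has φ(μ, ν) + φ(ν, μ) ≡ B(μ, ν) (mod 4). -/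
theorem stmt4 (I : Type*) [Fintype I] [DecidableEq I] (d : I → ℤ) (p : I → ℤ)
    (hp01 : ∀ i, p i = 0 ∨ p i = 1)
    (hpd : ∀ i, p i ≡ d i [ZMOD 2])
    (B : (I → ℤ) →ₗ[ℤ] (I → ℤ) →ₗ[ℤ] ℤ)
    (hsymm : ∀ x y, B x y = B y x)
    (hdiag : ∀ i, B (Pi.single i 1) (Pi.single i 1) = 2 * d i)
    (hoff : ∀ i j, i ≠ j → 2 ∣ B (Pi.single i 1) (Pi.single j 1))
    (hodd : ∀ i j, p i = 1 → p j = 1 → i = j)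
    (φ : (I → ℤ) → (I → ℤ) → ℤ)
    (hφl : ∀ μ μ' ν, φ (μ + μ') ν ≡ φ μ ν + φ μ' ν [ZMOD 4])
    (hφr : ∀ μ ν ν', φ μ (ν + ν') ≡ φ μ ν + φ μ ν' [ZMOD 4])
    (hφdiag : ∀ i, φ (Pi.single i 1) (Pi.single i 1) = d i)
    (hφoff : ∀ i j, i ≠ j → 2 ∣ φ (Pi.single i 1) (Pi.single j 1))
    (hφanti : ∀ i j, φ (Pi.single i 1) (Pi.single j 1) - φ (Pi.single j 1) (Pi.single i 1)
        ≡ B (Pi.single i 1) (Pi.single j 1) + 2 * p i * p j [ZMOD 4]) :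
    ∀ μ ν : I → ℤ, φ μ ν + φ ν μ ≡ B μ ν [ZMOD 4] := by
  -- the defect function, valued in ZMod 4
  set g : (I → ℤ) → (I → ℤ) → ZMod 4 :=
    fun μ ν => ((φ μ ν + φ ν μ - B μ ν : ℤ) : ZMod 4) with hg
  have hcast : ∀ {a b : ℤ}, a ≡ b [ZMOD 4] → ((a : ZMod 4) = (b : ZMod 4)) := by
    intro a b h
    exact (ZMod.intCast_eq_intCast_iff a b 4).mpr h
  -- additivity of g
  have haddl : ∀ μ μ' ν, g (μ + μ') ν = g μ ν + g μ' ν := by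
    intro μ μ' ν
    simp only [hg]
    have h1 := hcast (hφl μ μ' ν)
    have h2 := hcast (hφr ν μ μ')
    have h3 : B (μ + μ') ν = B μ ν + B μ' ν := by
      simp [map_add]
    push_cast [h3] at *
    linear_combination h1 + h2
  have haddr : ∀ μ ν ν', g μ (ν + ν') = g μ ν + g μ ν' := by
    intro μ ν ν'
    simp only [hg]
    have h1 := hcast (hφr μ ν ν')
    have h2 := hcast (hφl ν ν' μ)
    have h3 : B μ (ν + ν') = B μ ν + B μ ν' := by
      simp [map_add]
    push_cast [h3] at *
    linear_combination h1 + h2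
  -- package as a biadditive hom
  set G : (I → ℤ) →+ (I → ℤ) →+ ZMod 4 :=
    AddMonoidHom.mk' (fun μ => AddMonoidHom.mk' (g μ) (haddr μ))
      (fun μ μ' => AddMonoidHom.ext fun ν => haddl μ μ' ν) with hG
  -- g vanishes on basis vectors
  have hbasis : ∀ i j, g (Pi.single i 1) (Pi.single j 1) = 0 := by
    intro i j
    by_cases h : i = j
    · subst h
      simp only [hg]
      rw [hφdiag, hdiag]
      push_cast
      ring
    · obtain ⟨a, ha⟩ := hφoff i j h
      obtain ⟨b, hb⟩ := hφoff j i (Ne.symm h)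
      have hpij : p i * p j = 0 := by
        rcases hp01 i with hi | hi
        · rw [hi]; ring
        · rcases hp01 j with hj | hj
          · rw [hj]; ring
          · exact absurd (hodd i j hi hj) h
      have h1 := hcast (hφanti i j)
      rw [ha, hb, show (2:ℤ) * p i * p j = 0 by rw [mul_assoc, hpij, mul_zero],
        add_zero] at h1
      simp only [hg]
      rw [ha, hb]
      push_cast at h1 ⊢
      have h4 : ((4 : ℤ) : ZMod 4) = 0 := by decide
      linear_combination h1 + b * h4
  -- G vanishes on basis vectors
  have hGbasis : ∀ i j, G (Pi.single i 1) (Pi.single j 1) = 0 := hbasis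
  -- decompose arbitrary vectors
  have hdecomp : ∀ μ : I → ℤ, μ = ∑ i, μ i • Pi.single i (1 : ℤ) := by
    intro μ
    funext j
    simp [Pi.single_apply, Finset.sum_apply]
  have hGzero : ∀ μ ν, G μ ν = 0 := by
    intro μ ν
    conv_lhs => rw [hdecomp μ, hdecomp ν]
    rw [map_sum]
    refine Finset.sum_eq_zero fun j _ => ?_
    rw [AddMonoidHom.map_zsmul (G _), map_sum G, AddMonoidHom.finset_sum_apply]
    rw [Finset.sum_eq_zero fun i _ => ?_, smul_zero]
    rw [map_zsmul G, AddMonoidHom.smul_apply, hGbasis i j, smul_zero]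
  intro μ ν
  have := hGzero μ ν
  simp only [hG, AddMonoidHom.mk'_apply, hg] at this
  have h2 : ((φ μ ν + φ ν μ : ℤ) : ZMod 4) = ((B μ ν : ℤ) : ZMod 4) := by
    push_cast at this ⊢
    linear_combination this
  exact (ZMod.intCast_eq_intCast_iff _ _ 4).mp h2
end

section
/- Let K = ℚ(q)[π]/(π^2 - 1). There exists a function f : ℤ × ℤ → K^× such that f(a + 2s, b + 2t) = f(a, b) · (πq)^{-s b} · q^{-t a - 2 s t} for all a, b, s, t ∈ ℤ. -/
/-- The ring `K = ℚ(q)[π]/(π² - 1)`. -/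
abbrev CovRing : Type :=
  Polynomial (RatFunc ℚ) ⧸ Ideal.span {(Polynomial.X : Polynomial (RatFunc ℚ)) ^ 2 - 1}

/-- The image of `π` in `K`. -/
noncomputable abbrev piElt : CovRing := Ideal.Quotient.mk _ Polynomial.X

/-- The image of `q` in `K`. -/
noncomputable abbrev qElt : CovRing := Ideal.Quotient.mk _ (Polynomial.C RatFunc.X)

lemma piElt_sq : piElt ^ 2 = 1 := by
  have h : (Ideal.Quotient.mk (Ideal.span {(Polynomial.X : Polynomial (RatFunc ℚ)) ^ 2 - 1}))
      ((Polynomial.X : Polynomial (RatFunc ℚ)) ^ 2 - 1) = 0 :=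
    Ideal.Quotient.eq_zero_iff_mem.mpr (Ideal.subset_span rfl)
  rw [map_sub, map_pow, map_one, sub_eq_zero] at h
  exact h

lemma piElt_mul_self : piElt * piElt = 1 := by
  have := piElt_sq
  rwa [pow_two] at this

lemma qElt_mul_inv :
    qElt * (Ideal.Quotient.mk _ (Polynomial.C (RatFunc.X⁻¹ : RatFunc ℚ))) = 1 := by
  rw [← map_mul, ← Polynomial.C_mul, mul_inv_cancel₀ RatFunc.X_ne_zero, Polynomial.C_1, map_one]

noncomputable def πu : CovRingˣ := ⟨piElt, piElt, piElt_mul_self, piElt_mul_self⟩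

noncomputable def qu : CovRingˣ :=
  ⟨qElt, Ideal.Quotient.mk _ (Polynomial.C (RatFunc.X⁻¹ : RatFunc ℚ)), qElt_mul_inv, by
    rw [mul_comm]; exact qElt_mul_inv⟩

lemma πu_mul_self : πu * πu = 1 := Units.ext piElt_mul_self

lemma covZpowAdd (u : CovRingˣ) (m n : ℤ) : u ^ (m + n) = u ^ m * u ^ n := zpow_add u m n

lemma covMulZpow (u v : CovRingˣ) (n : ℤ) : (u * v) ^ n = u ^ n * v ^ n := mul_zpow u v n

lemma πu_sq : πu ^ (2 : ℤ) = 1 := by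
  rw [(by norm_num : (2 : ℤ) = 1 + 1), covZpowAdd, zpow_one, πu_mul_self]

lemma πu_shift (m k : ℤ) : πu ^ (2 * k + m) = πu ^ m := by
  have h : πu ^ (2 * k) = 1 := by
    rw [show 2 * k = k + k by ring, covZpowAdd, ← covZpowAdd]
    rw [show k + k = 2 * k by ring, zpow_mul, πu_sq, one_zpow]
  rw [covZpowAdd, h, one_mul]

theorem stmt6 :
    ∃ (πu qu : CovRingˣ) (f : ℤ → ℤ → CovRingˣ),
      (πu : CovRing) = piElt ∧ (qu : CovRing) = qElt ∧
      ∀ a b s t : ℤ,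
        f (a + 2 * s) (b + 2 * t) =
          f a b * (πu * qu) ^ (-(s * b)) * qu ^ (-(t * a) - 2 * (s * t)) := by
  refine ⟨πu, qu, fun a b => πu ^ (a / 2 * b) * qu ^ (-(a * b / 2)), rfl, rfl, ?_⟩
  intro a b s t
  have rhs_eq : ∀ e f g h : ℤ,
      πu ^ e * qu ^ f * (πu * qu) ^ g * qu ^ h = πu ^ (e + g) * qu ^ (f + (g + h)) := by
    intro e f g h
    rw [covMulZpow, covZpowAdd, covZpowAdd, covZpowAdd]
    simp only [mul_comm, mul_assoc, mul_left_comm]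
    congr 1
    exact mul_left_comm (qu ^ f) (πu ^ g) (qu ^ g * qu ^ h)
  beta_reduce
  have hdiv1 : (a + 2 * s) / 2 = a / 2 + s := by omega
  have hdiv2 : (a + 2 * s) * (b + 2 * t) / 2 = a * b / 2 + (s * b + t * a + 2 * (s * t)) := by
    have : (a + 2 * s) * (b + 2 * t) = a * b + (s * b + t * a + 2 * (s * t)) * 2 := by ring
    rw [this]; omega
  rw [rhs_eq, hdiv1, hdiv2]
  have hπ : (a / 2 + s) * (b + 2 * t)
      = 2 * (a / 2 * t + s * b + s * t) + (a / 2 * b + -(s * b)) := by ring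
  have hq : -(a * b / 2 + (s * b + t * a + 2 * (s * t)))
      = -(a * b / 2) + (-(s * b) + (-(t * a) - 2 * (s * t))) := by ring
  rw [hπ, πu_shift, hq]
end

section
/- Let K be a commutative ring, q, π ∈ K^× with π^2 = 1, and let f : ℤ × ℤ → K^× satisfy f(a + 2s, b + 2t) = f(a,b)(πq)^{-sb} q^{-ta - 2st} for all integers a,b,s,t. Define r(a,b) = f(a,b) · f(a,-b). Then: (1) r(a + 2s, b + 2t) = r(a,b) for all integers s,t; and (2) for ε₁, ε₂ ∈ {0,1} and all s,t ∈ ℤ, r(ε₁ + 2s, ε₂ + 2t) = f(ε₁, ε₂)^2 · q^{ε₁ ε₂}. -/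
theorem stmt8 (K : Type*) [CommRing K] (q π : Kˣ) (hπ : π ^ 2 = 1)
    (f : ℤ → ℤ → Kˣ)
    (hf : ∀ a b s t : ℤ, f (a + 2 * s) (b + 2 * t) =
      f a b * (π * q) ^ (-(s * b)) * q ^ (-(t * a) - 2 * (s * t)))
    (r : ℤ → ℤ → Kˣ) (hr : ∀ a b : ℤ, r a b = f a b * f a (-b)) :
    (∀ a b s t : ℤ, r (a + 2 * s) (b + 2 * t) = r a b) ∧
    (∀ ε₁ ε₂ : ℤ, (ε₁ = 0 ∨ ε₁ = 1) → (ε₂ = 0 ∨ ε₂ = 1) → ∀ s t : ℤ,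
      r (ε₁ + 2 * s) (ε₂ + 2 * t) = f ε₁ ε₂ ^ 2 * q ^ (ε₁ * ε₂)) := by
  have key : ∀ (x y u v : Kˣ) (n m : ℤ),
      x * u ^ (-n) * v ^ (-m) * (y * u ^ n * v ^ m) = x * y := by
    intro x y u v n m
    have : x * u ^ (-n) * v ^ (-m) * (y * u ^ n * v ^ m)
        = x * y * (u ^ (-n) * u ^ n) * (v ^ (-m) * v ^ m) := by
      simp only [mul_comm, mul_left_comm, mul_assoc]
    rw [this, ← zpow_add, ← zpow_add]
    simp
  have h1 : ∀ a b s t : ℤ, r (a + 2 * s) (b + 2 * t) = r a b := by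
    intro a b s t
    have e2 := hf a (-b) s (-t)
    rw [show -(s * -b) = s * b by ring,
      show -(-t * a) - 2 * (s * -t) = t * a + 2 * (s * t) by ring] at e2
    rw [hr, hr, show -(b + 2 * t) = -b + 2 * (-t) by ring, hf a b s t, e2,
      show -(t * a) - 2 * (s * t) = -(t * a + 2 * (s * t)) by ring]
    exact key _ _ _ _ _ _
  refine ⟨h1, ?_⟩
  intro ε₁ ε₂ hε₁ hε₂ s t
  rw [h1, hr]
  rcases hε₂ with h | h
  · subst h; simp [sq]
  · subst h
    have e := hf ε₁ 1 0 (-1)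
    norm_num at e
    rw [e, sq, mul_assoc, mul_one]
end
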